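/- Let {X_n} be a stationary sequence of real random variables and let {u_n} be a sequence of levels. Let {I_0=0, I_n, n≥1} be an increasing sequence of integer-valued random variables such that the spacings S_n = I_n − I_{n−1} are i.i.d. with E(S_n) = p, and set Z_n = M_{I_{n−1},I_n}. If the sequence { n · sup_{i≥1} P(M_{I_{i−1},I_i} > u_n) }_{n≥1} is bounded, then P(M_n ≤ u_n) − P( ∩_{i=1}^{[n/p]} { M_{I_{i−1},I_i} ≤ u_n } ) → 0 as n → ∞. -/

import Mathlib

open MeasureTheory Filter ProbabilityTheory

set_option maxHeartbeats 1000000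

noncomputable section

namespace EIPaper

variable {Ω : Type*} [MeasurableSpace Ω]

/-- `P(A)` as a real number. -/
def pr (μ : Measure Ω) (A : Set Ω) : ℝ := (μ A).toReal

/-- Block maximum `M_{i,j} = max_{s=i+1,…,j} X_s`, real-valued
(with junk value `0` when the block is empty, i.e. when `i ≥ j`). -/
def bmax (X : ℕ → Ω → ℝ) (i j : ℕ) (ω : Ω) : ℝ :=
  WithBot.unbotD 0 ((Finset.Icc (i + 1) j).image fun s => X s ω).max

/-- The event `M_{i,j} ≤ u` (with the convention `M_{i,j} = -∞` for empty blocks). -/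
def maxLE (X : ℕ → Ω → ℝ) (i j : ℕ) (u : ℝ) : Set Ω :=
  {ω | ∀ s ∈ Finset.Icc (i + 1) j, X s ω ≤ u}

/-- The event `M_{i,j} > u` (with the convention `M_{i,j} = -∞` for empty blocks). -/
def maxGT (X : ℕ → Ω → ℝ) (i j : ℕ) (u : ℝ) : Set Ω :=
  {ω | ∃ s ∈ Finset.Icc (i + 1) j, u < X s ω}

/-- Stationarity of the sequence `X`. -/
def IsStationary (μ : Measure Ω) (X : ℕ → Ω → ℝ) : Prop :=
  ∀ m : ℕ, Measure.map (fun ω => fun i : ℕ => X (i + m) ω) μ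
    = Measure.map (fun ω => fun i : ℕ => X i ω) μ

/-- The Leadbetter mixing coefficient `α_{n,l}` for the level `u`. -/
def alphaMix (μ : Measure Ω) (X : ℕ → Ω → ℝ) (u : ℝ) (n l : ℕ) : ℝ :=
  sSup {a : ℝ | ∃ i₁ p q j₁ : ℕ, 1 ≤ i₁ ∧ 1 ≤ p ∧ 1 ≤ q ∧
    i₁ + p + l ≤ j₁ ∧ j₁ + q ≤ n ∧
    a = |pr μ (maxLE X i₁ (i₁ + p) u ∩ maxLE X j₁ (j₁ + q) u)
        - pr μ (maxLE X i₁ (i₁ + p) u) * pr μ (maxLE X j₁ (j₁ + q) u)|}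

/-- Leadbetter's long-range dependence condition `D(u_n)`. -/
def CondD (μ : Measure Ω) (X : ℕ → Ω → ℝ) (u : ℕ → ℝ) : Prop :=
  ∃ l : ℕ → ℕ,
    Tendsto (fun n => (l n : ℝ) / (n : ℝ)) atTop (nhds 0) ∧
    Tendsto (fun n => alphaMix μ X (u n) n (l n)) atTop (nhds 0)

/-- Admissibility of a block-count sequence `k_n` for the conditions `D^{(k)}(u_n)`:
`k_n → ∞`, `k_n α_{n,l_n} → 0` and `k_n l_n / n → 0` for some spacer sequence `l_n`. -/
def AdmissibleK (μ : Measure Ω) (X : ℕ → Ω → ℝ) (u : ℕ → ℝ) (kseq : ℕ → ℕ) : Prop :=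
  ∃ l : ℕ → ℕ,
    Tendsto (fun n => (kseq n : ℝ)) atTop atTop ∧
    Tendsto (fun n => (kseq n : ℝ) * alphaMix μ X (u n) n (l n)) atTop (nhds 0) ∧
    Tendsto (fun n => (kseq n : ℝ) * (l n : ℝ) / (n : ℝ)) atTop (nhds 0)

/-- The local part of condition `D^{(k)}(u_n)` with block length `r_n`:
`n ⬝ P(X_1 > u_n, M_{1,k} ≤ u_n < M_{k,r_n}) → 0`. -/
def LocalDk (μ : Measure Ω) (X : ℕ → Ω → ℝ) (u : ℕ → ℝ) (k : ℕ) (r : ℕ → ℕ) : Prop :=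
  Tendsto (fun n : ℕ => (n : ℝ) *
      pr μ ({ω | u n < X 1 ω} ∩ maxLE X 1 k (u n) ∩ maxGT X k (r n) (u n)))
    atTop (nhds 0)

/-- The local dependence condition `D^{(k)}(u_n)` of Chernick, Hsing and McCormick. -/
def CondDk (μ : Measure Ω) (X : ℕ → Ω → ℝ) (u : ℕ → ℝ) (k : ℕ) : Prop :=
  ∃ kseq : ℕ → ℕ, AdmissibleK μ X u kseq ∧ LocalDk μ X u k (fun n => n / kseq n)

/-- The cycle sequence `Z_n = M_{I_{n-1}, I_n}` of a renewal process `I`. -/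
def cyc (X : ℕ → Ω → ℝ) (I : ℕ → Ω → ℕ) (n : ℕ) (ω : Ω) : ℝ :=
  bmax X (I (n - 1) ω) (I n ω) ω

/-- `θ` is the extremal index of the stationary sequence `X`. -/
def HasExtremalIndex (μ : Measure Ω) (X : ℕ → Ω → ℝ) (θ : ℝ) : Prop :=
  ∀ τ : ℝ, 0 < τ → ∃ u : ℕ → ℝ,
    Tendsto (fun n : ℕ => (n : ℝ) * pr μ {ω | u n < X 1 ω}) atTop (nhds τ) ∧
    Tendsto (fun n => pr μ {ω | ∀ s ∈ Finset.Icc 1 n, X s ω ≤ u n}) atTop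
      (nhds (Real.exp (-(θ * τ))))

/-- The finite-dimensional distributions of `X` are multivariate extreme value
(max-stable) distributions: `G(m x₁, …, m x_d)^m = G(x₁, …, x_d)`. -/
def MaxStableFDD (μ : Measure Ω) (X : ℕ → Ω → ℝ) : Prop :=
  ∀ (d : ℕ) (x : Fin d → ℝ) (m : ℕ), 1 ≤ m → (∀ i, 0 < x i) →
    (pr μ {ω | ∀ i : Fin d, X ((i : ℕ) + 1) ω ≤ (m : ℝ) * x i}) ^ m
      = pr μ {ω | ∀ i : Fin d, X ((i : ℕ) + 1) ω ≤ x i}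

/-- The moving maxima process `X_n = sup_{l ≥ 1} sup_{j ∈ ℤ} α_{l,j} Y_{l,n-j}`. -/
def mmProc (α : ℕ → ℤ → ℝ) (Y : ℕ → ℤ → Ω → ℝ) : ℕ → Ω → ℝ :=
  fun n ω => ⨆ (l : ℕ) (j : ℤ), α l j * Y l ((n : ℤ) - j) ω


set_option linter.unusedSectionVars false

lemma pr_nonneg (μ : Measure Ω) (A : Set Ω) : 0 ≤ pr μ A := ENNReal.toReal_nonneg

lemma pr_mono (μ : Measure Ω) [IsProbabilityMeasure μ] {A B : Set Ω} (h : A ⊆ B) :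
    pr μ A ≤ pr μ B :=
  ENNReal.toReal_mono (measure_ne_top μ B) (measure_mono h)

lemma pr_le_one (μ : Measure Ω) [IsProbabilityMeasure μ] (A : Set Ω) : pr μ A ≤ 1 := by
  simpa [pr] using pr_mono μ (Set.subset_univ A)

lemma pr_union_le (μ : Measure Ω) [IsProbabilityMeasure μ] (A B : Set Ω) :
    pr μ (A ∪ B) ≤ pr μ A + pr μ B := by
  have h := measure_union_le (μ := μ) A B
  have := ENNReal.toReal_mono (by finiteness) h
  rwa [ENNReal.toReal_add (measure_ne_top μ A) (measure_ne_top μ B)] at this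

lemma pr_biUnion_le {ι : Type*} (μ : Measure Ω) [IsProbabilityMeasure μ]
    (s : Finset ι) (f : ι → Set Ω) :
    pr μ (⋃ i ∈ s, f i) ≤ ∑ i ∈ s, pr μ (f i) := by
  have h := measure_biUnion_finset_le (μ := μ) s f
  have := ENNReal.toReal_mono (by
    refine (ENNReal.sum_lt_top.mpr ?_).ne
    intro i _; exact measure_lt_top μ (f i)) h
  rwa [ENNReal.toReal_sum (fun i _ => measure_ne_top μ (f i))] at this

lemma abs_pr_sub_pr_le (μ : Measure Ω) [IsProbabilityMeasure μ] (A B : Set Ω) :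
    |pr μ A - pr μ B| ≤ pr μ ((A \ B) ∪ (B \ A)) := by
  have key : ∀ S T : Set Ω, pr μ S ≤ pr μ T + pr μ ((S \ T) ∪ (T \ S)) := by
    intro S T
    have h1 : S ⊆ T ∪ ((S \ T) ∪ (T \ S)) := by
      intro x hx
      by_cases hxT : x ∈ T
      · exact Or.inl hxT
      · exact Or.inr (Or.inl ⟨hx, hxT⟩)
    calc pr μ S ≤ pr μ (T ∪ ((S \ T) ∪ (T \ S))) := pr_mono μ h1
      _ ≤ _ := pr_union_le μ _ _
  rw [abs_sub_le_iff]
  constructor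
  · linarith [key A B]
  · have := key B A
    rw [Set.union_comm] at this
    linarith


lemma le_bmax {X : ℕ → Ω → ℝ} {i j s : ℕ} {ω : Ω} (h : s ∈ Finset.Icc (i + 1) j) :
    X s ω ≤ bmax X i j ω := by
  classical
  have hmem : X s ω ∈ (Finset.Icc (i + 1) j).image fun s => X s ω :=
    Finset.mem_image_of_mem _ h
  have hne : ((Finset.Icc (i + 1) j).image fun s => X s ω).Nonempty := ⟨_, hmem⟩
  obtain ⟨m, hm⟩ := Finset.max_of_nonempty hne
  have := Finset.le_max hmem
  rw [hm] at this
  rw [bmax, hm, WithBot.unbotD_coe]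
  exact_mod_cast this

lemma bmax_le_iff {X : ℕ → Ω → ℝ} {i j : ℕ} {ω : Ω} (hij : i < j) {u : ℝ} :
    bmax X i j ω ≤ u ↔ ∀ s ∈ Finset.Icc (i + 1) j, X s ω ≤ u := by
  constructor
  · intro h s hs
    exact (le_bmax hs).trans h
  · intro h
    have hne : (Finset.Icc (i + 1) j).Nonempty := by
      refine ⟨j, ?_⟩
      simp [Finset.mem_Icc, hij, Nat.succ_le_of_lt hij]
    obtain ⟨m, hm⟩ := Finset.max_of_nonempty (hne.image fun s => X s ω)
    rw [bmax, hm, WithBot.unbotD_coe]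
    obtain ⟨s, hs, rfl⟩ := Finset.mem_image.mp (Finset.mem_of_max hm)
    exact h s hs

section Renewal

variable {X : ℕ → Ω → ℝ} {I : ℕ → Ω → ℕ}
  (hI0 : ∀ ω, I 0 ω = 0) (hImono : ∀ ω, StrictMono fun n => I n ω)

include hImono in
lemma I_eq_sum (ω : Ω) (m : ℕ) :
    I m ω = I 0 ω + ∑ i ∈ Finset.range m, (I (i + 1) ω - I i ω) := by
  induction m with
  | zero => simp
  | succ m ih =>
    rw [Finset.sum_range_succ, ← Nat.add_assoc, ← ih,
      Nat.add_sub_cancel' ((hImono ω).monotone (Nat.le_succ m))]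

include hImono in
lemma exists_cycle {a b s : ℕ} (ω : Ω) (hab : a ≤ b) (h1 : I a ω < s) (h2 : s ≤ I b ω) :
    ∃ i, a < i ∧ i ≤ b ∧ I (i - 1) ω < s ∧ s ≤ I i ω := by
  classical
  have hex : ∃ i, s ≤ I i ω := ⟨b, h2⟩
  set i := Nat.find hex with hi
  have hPi : s ≤ I i ω := Nat.find_spec hex
  have hib : i ≤ b := Nat.find_le h2
  have hai : a < i := by
    by_contra hc
    push_neg at hc
    exact absurd (hPi.trans ((hImono ω).monotone hc)) (not_le.mpr h1)
  have h0i : 0 < i := lt_of_le_of_lt (Nat.zero_le a) hai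
  have hprev : ¬ s ≤ I (i - 1) ω := Nat.find_min hex (Nat.sub_lt h0i one_pos)
  exact ⟨i, hai, hib, not_le.mp hprev, hPi⟩

include hImono in
lemma cyc_le_iff {i : ℕ} (hi : 1 ≤ i) (ω : Ω) {u : ℝ} :
    cyc X I i ω ≤ u ↔ ∀ s ∈ Finset.Icc (I (i - 1) ω + 1) (I i ω), X s ω ≤ u :=
  bmax_le_iff (hImono ω (Nat.sub_lt hi one_pos))

include hImono in
lemma lt_cyc {i s : ℕ} (ω : Ω) {u : ℝ}
    (hs : s ∈ Finset.Icc (I (i - 1) ω + 1) (I i ω)) (hX : u < X s ω) :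
    u < cyc X I i ω :=
  lt_of_lt_of_le hX (le_bmax hs)

include hI0 hImono in
lemma cycEvent_eq (k : ℕ) (u : ℝ) :
    {ω | ∀ i ∈ Finset.Icc 1 k, cyc X I i ω ≤ u}
      = {ω | ∀ s ∈ Finset.Icc 1 (I k ω), X s ω ≤ u} := by
  ext ω
  simp only [Set.mem_setOf_eq]
  constructor
  · intro h s hs
    rw [Finset.mem_Icc] at hs
    have h1 : I 0 ω < s := by rw [hI0 ω]; exact hs.1
    obtain ⟨i, hi0, hik, hib1, hib2⟩ := exists_cycle hImono ω (Nat.zero_le k) h1 hs.2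
    exact (cyc_le_iff hImono hi0 ω).mp (h i (Finset.mem_Icc.mpr ⟨hi0, hik⟩)) s
      (Finset.mem_Icc.mpr ⟨hib1, hib2⟩)
  · intro h i hi
    rw [Finset.mem_Icc] at hi
    rw [cyc_le_iff hImono hi.1]
    intro s hs
    rw [Finset.mem_Icc] at hs
    refine h s (Finset.mem_Icc.mpr ⟨le_trans (Nat.le_add_left 1 _) hs.1,
      le_trans hs.2 ((hImono ω).monotone hi.2)⟩)

include hI0 hImono in
lemma key_bound (μ : Measure Ω) [IsProbabilityMeasure μ]
    (n k m₁ m₂ : ℕ) (hm₁ : m₁ ≤ k) (hm₂ : k ≤ m₂) (u : ℝ) :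
    |pr μ {ω | ∀ s ∈ Finset.Icc 1 n, X s ω ≤ u}
        - pr μ {ω | ∀ i ∈ Finset.Icc 1 k, cyc X I i ω ≤ u}|
      ≤ pr μ {ω | ¬ (I m₁ ω ≤ n ∧ n ≤ I m₂ ω)}
        + ∑ i ∈ Finset.Icc (m₁ + 1) m₂, pr μ {ω | u < cyc X I i ω} := by
  rw [cycEvent_eq hI0 hImono]
  set A := {ω | ∀ s ∈ Finset.Icc 1 n, X s ω ≤ u}
  set B := {ω | ∀ s ∈ Finset.Icc 1 (I k ω), X s ω ≤ u}
  refine le_trans (abs_pr_sub_pr_le μ A B) ?_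
  have hsub : (A \ B) ∪ (B \ A) ⊆
      {ω | ¬ (I m₁ ω ≤ n ∧ n ≤ I m₂ ω)}
        ∪ ⋃ i ∈ Finset.Icc (m₁ + 1) m₂, {ω | u < cyc X I i ω} := by
    intro ω hω
    by_cases hG : I m₁ ω ≤ n ∧ n ≤ I m₂ ω
    · right
      have key : ∃ s, I m₁ ω < s ∧ s ≤ I m₂ ω ∧ u < X s ω := by
        rcases hω with ⟨hA, hB⟩ | ⟨hB, hA⟩
        · simp only [A, B, Set.mem_setOf_eq, not_forall] at hA hB
          obtain ⟨s, hs, hsu⟩ := hB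
          rw [Finset.mem_Icc] at hs
          have hns : n < s := by
            by_contra hc
            push_neg at hc
            exact absurd (hA s (Finset.mem_Icc.mpr ⟨hs.1, hc⟩)) hsu
          exact ⟨s, lt_of_le_of_lt hG.1 hns,
            le_trans hs.2 ((hImono ω).monotone hm₂), not_le.mp hsu⟩
        · simp only [A, B, Set.mem_setOf_eq, not_forall] at hA hB
          obtain ⟨s, hs, hsu⟩ := hA
          rw [Finset.mem_Icc] at hs
          have hks : I k ω < s := by
            by_contra hc
            push_neg at hc
            exact absurd (hB s (Finset.mem_Icc.mpr ⟨hs.1, hc⟩)) hsu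
          exact ⟨s, lt_of_le_of_lt ((hImono ω).monotone hm₁) hks,
            le_trans hs.2 hG.2, not_le.mp hsu⟩
      obtain ⟨s, hs1, hs2, hsu⟩ := key
      obtain ⟨i, hi1, hi2, hib1, hib2⟩ :=
        exists_cycle hImono ω (le_trans hm₁ hm₂) hs1 hs2
      refine Set.mem_biUnion (Finset.mem_Icc.mpr ⟨hi1, hi2⟩) ?_
      exact lt_cyc hImono ω (Finset.mem_Icc.mpr ⟨hib1, hib2⟩) hsu
    · exact Or.inl hG
  refine le_trans (pr_mono μ hsub) ?_
  refine le_trans (pr_union_le μ _ _) ?_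
  exact add_le_add le_rfl (pr_biUnion_le μ _ _)

end Renewal

lemma pr_tendsto_zero (μ : Measure Ω) [IsProbabilityMeasure μ] (b : ℕ → Set Ω)
    (hmeas : ∀ n, MeasurableSet (b n)) (h : ∀ᵐ ω ∂μ, ∀ᶠ n in atTop, ω ∉ b n) :
    Tendsto (fun n => pr μ (b n)) atTop (nhds 0) := by
  have h' : Tendsto (fun n => μ (b n)) atTop (nhds (μ (∅ : Set Ω))) := by
    refine tendsto_measure_of_ae_tendsto_indicator_of_isFiniteMeasure atTop
      MeasurableSet.empty hmeas ?_
    filter_upwards [h] with ω hω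
    filter_upwards [hω] with n hn
    simp [hn]
  rw [measure_empty] at h'
  have h2 := (ENNReal.tendsto_toReal (a := 0) (by simp)).comp h'
  exact (by simpa using h2 : Tendsto (ENNReal.toReal ∘ fun n => μ (b n)) atTop (nhds 0))

lemma trunc_large (μ : Measure Ω) [IsProbabilityMeasure μ] {f : Ω → ℝ}
    (hf : Measurable f) (h0 : ∀ ω, 0 ≤ f ω) (hnint : ¬ Integrable f μ) (R : ℝ) :
    ∃ K : ℕ, R ≤ ∫ ω, min (f ω) (K : ℝ) ∂μ := by
  have hlint : ∫⁻ ω, ENNReal.ofReal (f ω) ∂μ = ⊤ := by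
    by_contra hc
    refine hnint ⟨hf.aestronglyMeasurable, ?_⟩
    rw [hasFiniteIntegral_iff_ofReal (ae_of_all μ h0)]
    exact lt_top_iff_ne_top.mpr hc
  have hmono : Tendsto (fun K : ℕ => ∫⁻ ω, ENNReal.ofReal (min (f ω) K) ∂μ) atTop
      (nhds (∫⁻ ω, ENNReal.ofReal (f ω) ∂μ)) := by
    refine lintegral_tendsto_of_tendsto_of_monotone
      (fun K => ((hf.min measurable_const).ennreal_ofReal).aemeasurable) ?_ ?_
    · refine ae_of_all μ fun ω a b hab => ?_
      exact ENNReal.ofReal_le_ofReal (min_le_min le_rfl (by exact_mod_cast hab))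
    · refine ae_of_all μ fun ω => ?_
      refine tendsto_atTop_of_eventually_const (i₀ := ⌈f ω⌉₊) fun K hK => ?_
      have : f ω ≤ (K : ℝ) := le_trans (Nat.le_ceil _) (by exact_mod_cast hK)
      rw [min_eq_left this]
  rw [hlint] at hmono
  have hev : ∀ᶠ K : ℕ in atTop,
      ENNReal.ofReal R < ∫⁻ ω, ENNReal.ofReal (min (f ω) K) ∂μ :=
    hmono.eventually (lt_mem_nhds (ENNReal.ofReal_lt_top))
  obtain ⟨K, hK⟩ := hev.exists
  refine ⟨K, ?_⟩
  have hfin : ∫⁻ ω, ENNReal.ofReal (min (f ω) K) ∂μ ≠ ⊤ := by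
    have hle : ∫⁻ ω, ENNReal.ofReal (min (f ω) K) ∂μ ≤ ∫⁻ _, ENNReal.ofReal (K : ℝ) ∂μ :=
      lintegral_mono fun ω => ENNReal.ofReal_le_ofReal (min_le_right _ _)
    rw [lintegral_const] at hle
    exact (lt_of_le_of_lt hle (by finiteness)).ne
  rw [integral_eq_lintegral_of_nonneg_ae
      (ae_of_all μ fun ω => le_min (h0 ω) (Nat.cast_nonneg K))
      (hf.min measurable_const).aestronglyMeasurable]
  exact (ENNReal.ofReal_le_iff_le_toReal hfin).mp hK.le

lemma slln_phi (μ : Measure Ω) [IsProbabilityMeasure μ] (I : ℕ → Ω → ℕ)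
    (hSmeas : ∀ n : ℕ, Measurable fun ω => I (n + 1) ω - I n ω)
    (hSindep : iIndepFun (fun n ω => I (n + 1) ω - I n ω) μ)
    (hSident : ∀ n : ℕ, Measure.map (fun ω => I (n + 1) ω - I n ω) μ
      = Measure.map (fun ω => I 1 ω - I 0 ω) μ)
    (φ : ℕ → ℝ) (hint : Integrable (fun ω => φ (I 1 ω - I 0 ω)) μ) :
    ∀ᵐ ω ∂μ, Tendsto
      (fun m : ℕ => (∑ i ∈ Finset.range m, φ (I (i + 1) ω - I i ω)) / m)
      atTop (nhds (∫ ω, φ (I 1 ω - I 0 ω) ∂μ)) := by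
  have h := strong_law_ae_real (fun i ω => φ (I (i + 1) ω - I i ω)) hint
    (fun i j hij => (hSindep.indepFun hij).comp
      (measurable_from_top (f := φ)) (measurable_from_top (f := φ)))
    (fun i => IdentDistrib.comp
      (⟨(hSmeas i).aemeasurable, (hSmeas 0).aemeasurable, hSident i⟩ :
        IdentDistrib (fun ω => I (i + 1) ω - I i ω) (fun ω => I 1 ω - I 0 ω) μ μ)
      (measurable_from_top (f := φ)))
  exact h

section Finisher
variable {X : ℕ → Ω → ℝ} {I : ℕ → Ω → ℕ}
  (hI0 : ∀ ω, I 0 ω = 0) (hImono : ∀ ω, StrictMono fun n => I n ω)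

include hI0 hImono in
lemma finisher (μ : Measure Ω) [IsProbabilityMeasure μ] (u : ℕ → ℝ) (C : ℝ)
    (hterm : ∀ n i : ℕ, 1 ≤ i → 1 ≤ n → pr μ {ω | u n < cyc X I i ω} ≤ C / n)
    (ε : ℝ) (k m₁ m₂ : ℕ → ℕ) (hm₁ : ∀ n, m₁ n ≤ k n) (hm₂ : ∀ n, k n ≤ m₂ n)
    (hbadev : ∀ᶠ n : ℕ in atTop,
      pr μ {ω | ¬ (I (m₁ n) ω ≤ n ∧ n ≤ I (m₂ n) ω)} < ε / 2)
    (hcardev : ∀ᶠ n : ℕ in atTop,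
      1 ≤ n ∧ ((m₂ n - m₁ n : ℕ) : ℝ) * (C / n) < ε / 2) :
    ∀ᶠ n : ℕ in atTop,
      ‖pr μ {ω | ∀ s ∈ Finset.Icc 1 n, X s ω ≤ u n}
        - pr μ {ω | ∀ i ∈ Finset.Icc 1 (k n), cyc X I i ω ≤ u n}‖ < ε := by
  filter_upwards [hbadev, hcardev] with n hb hc
  obtain ⟨hn1, hcard⟩ := hc
  rw [Real.norm_eq_abs]
  have hkb := key_bound (X := X) hI0 hImono μ n (k n) (m₁ n) (m₂ n) (hm₁ n) (hm₂ n) (u n)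
  have hsum : ∑ i ∈ Finset.Icc (m₁ n + 1) (m₂ n), pr μ {ω | u n < cyc X I i ω}
      ≤ ((m₂ n - m₁ n : ℕ) : ℝ) * (C / n) := by
    have hcardIcc : (Finset.Icc (m₁ n + 1) (m₂ n)).card = m₂ n - m₁ n := by
      rw [Nat.card_Icc]; omega
    calc ∑ i ∈ Finset.Icc (m₁ n + 1) (m₂ n), pr μ {ω | u n < cyc X I i ω}
        ≤ (Finset.Icc (m₁ n + 1) (m₂ n)).card • (C / (n : ℝ)) := by
          refine Finset.sum_le_card_nsmul _ _ _ fun i hi => ?_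
          rw [Finset.mem_Icc] at hi
          exact hterm n i (by omega) hn1
      _ = ((m₂ n - m₁ n : ℕ) : ℝ) * (C / n) := by rw [hcardIcc, nsmul_eq_mul]
  calc |pr μ {ω | ∀ s ∈ Finset.Icc 1 n, X s ω ≤ u n}
        - pr μ {ω | ∀ i ∈ Finset.Icc 1 (k n), cyc X I i ω ≤ u n}|
      ≤ pr μ {ω | ¬ (I (m₁ n) ω ≤ n ∧ n ≤ I (m₂ n) ω)}
        + ∑ i ∈ Finset.Icc (m₁ n + 1) (m₂ n), pr μ {ω | u n < cyc X I i ω} := hkb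
    _ < ε / 2 + ε / 2 := by linarith
    _ = ε := by ring

end Finisher


/-- Proposition 1: comparison of `P(M_n ≤ u_n)` with the probability
that the first `[n/p]` cycles of the renewal process stay below `u_n`. -/
theorem max_sub_cycles_inter_tendsto_zero
    (μ : Measure Ω) [IsProbabilityMeasure μ]
    (X : ℕ → Ω → ℝ) (u : ℕ → ℝ) (I : ℕ → Ω → ℕ) (p : ℝ)
    (hXmeas : ∀ i, Measurable (X i))
    (hstat : IsStationary μ X)
    (hI0 : ∀ ω, I 0 ω = 0)
    (hImono : ∀ ω, StrictMono fun n => I n ω)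
    (hSmeas : ∀ n : ℕ, Measurable fun ω => I (n + 1) ω - I n ω)
    (hSindep : iIndepFun (fun n ω => I (n + 1) ω - I n ω) μ)
    (hSident : ∀ n : ℕ, Measure.map (fun ω => I (n + 1) ω - I n ω) μ
      = Measure.map (fun ω => I 1 ω - I 0 ω) μ)
    (hSmean : ∀ n : ℕ, ∫ ω, ((I (n + 1) ω - I n ω : ℕ) : ℝ) ∂μ = p)
    (hbdd : ∃ C : ℝ, ∀ n : ℕ,
      (n : ℝ) * (⨆ i : ℕ, pr μ {ω | u n < cyc X I (i + 1) ω}) ≤ C) :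
    Tendsto (fun n : ℕ =>
        pr μ {ω | ∀ s ∈ Finset.Icc 1 n, X s ω ≤ u n}
          - pr μ {ω | ∀ i ∈ Finset.Icc 1 ⌊(n : ℝ) / p⌋₊, cyc X I i ω ≤ u n})
      atTop (nhds 0) := by
  classical
  obtain ⟨C, hC⟩ := hbdd
  have hImeas : ∀ m : ℕ, Measurable fun ω => I m ω := by
    intro m
    have heq : (fun ω => I m ω)
        = fun ω => ∑ i ∈ Finset.range m, (I (i + 1) ω - I i ω) := by
      funext ω
      rw [I_eq_sum hImono ω m, hI0 ω, Nat.zero_add]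
    rw [heq]
    exact Finset.measurable_sum _ fun i _ => hSmeas i
  have hIcast : ∀ (ω : Ω) (m : ℕ),
      (I m ω : ℝ) = ∑ i ∈ Finset.range m, ((I (i + 1) ω - I i ω : ℕ) : ℝ) := by
    intro ω m
    rw [I_eq_sum hImono ω m, hI0 ω, Nat.zero_add, Nat.cast_sum]
  have hC0 : 0 ≤ C := by
    have h1 := hC 1
    have h2 : (0 : ℝ) ≤ ⨆ i : ℕ, pr μ {ω | u 1 < cyc X I (i + 1) ω} :=
      Real.iSup_nonneg fun i => pr_nonneg μ _
    push_cast at h1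
    linarith
  have hterm : ∀ n i : ℕ, 1 ≤ i → 1 ≤ n → pr μ {ω | u n < cyc X I i ω} ≤ C / n := by
    intro n i hi hn
    have hb : BddAbove (Set.range fun j : ℕ => pr μ {ω | u n < cyc X I (j + 1) ω}) :=
      ⟨1, by rintro x ⟨j, rfl⟩; exact pr_le_one μ _⟩
    have h1 : pr μ {ω | u n < cyc X I i ω}
        ≤ ⨆ j : ℕ, pr μ {ω | u n < cyc X I (j + 1) ω} := by
      have h := le_ciSup hb (i - 1)
      rwa [Nat.sub_add_cancel hi] at h
    have h2 := hC n
    have hnpos : (0 : ℝ) < n := by exact_mod_cast hn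
    have h3 : (⨆ j : ℕ, pr μ {ω | u n < cyc X I (j + 1) ω}) ≤ C / n := by
      rw [le_div_iff₀ hnpos]
      calc (⨆ j : ℕ, pr μ {ω | u n < cyc X I (j + 1) ω}) * n
          = (n : ℝ) * ⨆ j : ℕ, pr μ {ω | u n < cyc X I (j + 1) ω} := by ring
        _ ≤ C := h2
    exact h1.trans h3
  have hYmeas : Measurable fun ω => ((I 1 ω - I 0 ω : ℕ) : ℝ) :=
    (measurable_from_top (f := fun x : ℕ => (x : ℝ))).comp (hSmeas 0)
  have hY1 : ∀ ω, (1 : ℝ) ≤ ((I 1 ω - I 0 ω : ℕ) : ℝ) := by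
    intro ω
    have h : I 0 ω < I 1 ω := hImono ω Nat.zero_lt_one
    have h2 : 1 ≤ I 1 ω - I 0 ω := by omega
    exact_mod_cast h2
  rw [NormedAddCommGroup.tendsto_nhds_zero]
  intro ε hε
  set δ : ℝ := min (1 / 2) (ε / (16 * (C + 1))) with hδdef
  have hδ0 : 0 < δ := lt_min (by norm_num) (by positivity)
  have hδhalf : δ ≤ 1 / 2 := min_le_left _ _
  have hδC : 4 * δ * C ≤ ε / 4 := by
    have h1 : δ ≤ ε / (16 * (C + 1)) := min_le_right _ _
    have h2 : (0 : ℝ) < 16 * (C + 1) := by linarith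
    rw [le_div_iff₀ h2] at h1
    nlinarith
  have hev2C : ∀ᶠ n : ℕ in atTop, 2 * C / n < ε / 4 :=
    (tendsto_const_div_atTop_nhds_zero_nat (2 * C)).eventually
      (gt_mem_nhds (by positivity))
  have hevC : ∀ᶠ n : ℕ in atTop, C / n < ε / 4 :=
    (tendsto_const_div_atTop_nhds_zero_nat C).eventually
      (gt_mem_nhds (by positivity))
  have hlinev : ∀ a b : ℝ, 0 < a → ∀ᶠ n : ℕ in atTop, b ≤ a * n := by
    intro a b ha
    filter_upwards [tendsto_natCast_atTop_atTop.eventually_ge_atTop (b / a)] with n hn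
    have := (div_le_iff₀ ha).mp hn
    linarith [this]
  by_cases hint : Integrable (fun ω => ((I 1 ω - I 0 ω : ℕ) : ℝ)) μ
  · -- integrable case : p ≥ 1
    have hp : ∫ ω, ((I 1 ω - I 0 ω : ℕ) : ℝ) ∂μ = p := hSmean 0
    have hp1 : 1 ≤ p := by
      rw [← hp]
      have h1 : ∫ (_ : Ω), (1 : ℝ) ∂μ = 1 := by simp
      rw [← h1]
      exact integral_mono (integrable_const 1) hint fun ω => hY1 ω
    have hppos : 0 < p := lt_of_lt_of_le one_pos hp1
    have hslln := slln_phi μ I hSmeas hSindep hSident (fun x : ℕ => (x : ℝ)) hint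
    have hae : ∀ᵐ ω ∂μ, ∀ᶠ n : ℕ in atTop,
        I (⌊(n : ℝ) / p⌋₊ - ⌈2 * δ * (n : ℝ)⌉₊) ω ≤ n
          ∧ n ≤ I (⌊(n : ℝ) / p⌋₊ + ⌈2 * δ * (n : ℝ)⌉₊) ω := by
      filter_upwards [hslln] with ω hω
      have hfeq : (fun m : ℕ =>
            (∑ i ∈ Finset.range m, ((I (i + 1) ω - I i ω : ℕ) : ℝ)) / m)
          = fun m : ℕ => (I m ω : ℝ) / m := by
        funext m
        rw [← hIcast ω m]
      rw [hfeq, hp] at hω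
      obtain ⟨M₀, hM₀⟩ := Metric.tendsto_atTop.mp hω (p * δ / 2) (by positivity)
      set M : ℕ := max M₀ 1 with hM
      have hub : ∀ m : ℕ, M ≤ m →
          (I m ω : ℝ) ≤ m * (p + p * δ / 2) ∧ (m : ℝ) * (p - p * δ / 2) ≤ I m ω := by
        intro m hm
        have h1 := hM₀ m (le_trans (le_max_left _ _) hm)
        rw [Real.dist_eq, abs_lt] at h1
        have hm1 : (1 : ℝ) ≤ m := by exact_mod_cast le_trans (le_max_right _ _) hm
        have hmpos : (0 : ℝ) < m := by linarith
        constructor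
        · have h2 : (I m ω : ℝ) / m < p + p * δ / 2 := by linarith [h1.2]
          have := (div_lt_iff₀ hmpos).mp h2
          linarith
        · have h2 : p - p * δ / 2 < (I m ω : ℝ) / m := by linarith [h1.1]
          have := (lt_div_iff₀ hmpos).mp h2
          linarith
      have hfacpos : (0 : ℝ) < p + p * δ / 2 := by nlinarith
      have hglob : ∀ m : ℕ, (I m ω : ℝ) ≤ m * (p + p * δ / 2) + I M ω := by
        intro m
        by_cases hm : M ≤ m
        · have h1 := (hub m hm).1
          have h2 : (0 : ℝ) ≤ I M ω := Nat.cast_nonneg _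
          linarith
        · push_neg at hm
          have h1 : (I m ω : ℝ) ≤ I M ω := by
            exact_mod_cast (hImono ω).monotone hm.le
          have h2 : (0 : ℝ) ≤ (m : ℝ) * (p + p * δ / 2) :=
            mul_nonneg (Nat.cast_nonneg _) hfacpos.le
          linarith
      filter_upwards [hlinev δ (I M ω : ℝ) hδ0, hlinev (2 * δ) (M : ℝ) (by linarith),
        hlinev δ p hδ0] with n h1 h2 h3
      have hnn : (0 : ℝ) ≤ n := Nat.cast_nonneg n
      have hq0 : (0 : ℝ) ≤ (n : ℝ) / p := by positivity
      have hqp : (n : ℝ) / p * p = n := div_mul_cancel₀ _ (ne_of_gt hppos)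
      constructor
      · by_cases hck : ⌈2 * δ * (n : ℝ)⌉₊ ≤ ⌊(n : ℝ) / p⌋₊
        · have hm1cast : ((⌊(n : ℝ) / p⌋₊ - ⌈2 * δ * (n : ℝ)⌉₊ : ℕ) : ℝ)
              = (⌊(n : ℝ) / p⌋₊ : ℝ) - (⌈2 * δ * (n : ℝ)⌉₊ : ℝ) := by
            exact_mod_cast Nat.cast_sub hck
          have hkle : (⌊(n : ℝ) / p⌋₊ : ℝ) ≤ (n : ℝ) / p := Nat.floor_le hq0
          have hap : (⌊(n : ℝ) / p⌋₊ : ℝ) * p ≤ n := (le_div_iff₀ hppos).mp hkle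
          have hcge : 2 * δ * (n : ℝ) ≤ ⌈2 * δ * (n : ℝ)⌉₊ := Nat.le_ceil _
          have hba : (⌈2 * δ * (n : ℝ)⌉₊ : ℝ) ≤ ⌊(n : ℝ) / p⌋₊ := by exact_mod_cast hck
          have hkey := hglob (⌊(n : ℝ) / p⌋₊ - ⌈2 * δ * (n : ℝ)⌉₊)
          have e3 : ((⌊(n : ℝ) / p⌋₊ - ⌈2 * δ * (n : ℝ)⌉₊ : ℕ) : ℝ) * (p + p * δ / 2)
              ≤ ((⌊(n : ℝ) / p⌋₊ : ℝ) - 2 * δ * n) * (p + p * δ / 2) := by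
            refine mul_le_mul_of_nonneg_right ?_ hfacpos.le
            rw [hm1cast]
            linarith
          have p1 : (⌊(n : ℝ) / p⌋₊ : ℝ) * p * δ ≤ (n : ℝ) * δ :=
            mul_le_mul_of_nonneg_right hap hδ0.le
          have p2 : 2 * δ * (n : ℝ) * 1 ≤ 2 * δ * (n : ℝ) * p :=
            mul_le_mul_of_nonneg_left hp1 (by positivity)
          have p3 : (0 : ℝ) ≤ δ * δ * n * p := by positivity
          have p4 : (0 : ℝ) ≤ (n : ℝ) * δ := by positivity
          have hfin : (I (⌊(n : ℝ) / p⌋₊ - ⌈2 * δ * (n : ℝ)⌉₊) ω : ℝ) ≤ n := by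
            nlinarith [hkey, e3, hap, p1, p2, p3, p4, h1]
          exact_mod_cast hfin
        · push_neg at hck
          have h0 : ⌊(n : ℝ) / p⌋₊ - ⌈2 * δ * (n : ℝ)⌉₊ = 0 := by omega
          rw [h0, hI0 ω]
          exact Nat.zero_le n
      · have hcge : 2 * δ * (n : ℝ) ≤ ⌈2 * δ * (n : ℝ)⌉₊ := Nat.le_ceil _
        have hfl0 : (0 : ℝ) ≤ (⌊(n : ℝ) / p⌋₊ : ℝ) := Nat.cast_nonneg _
        have hkle : (⌊(n : ℝ) / p⌋₊ : ℝ) ≤ (n : ℝ) / p := Nat.floor_le hq0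
        have hap : (⌊(n : ℝ) / p⌋₊ : ℝ) * p ≤ n := (le_div_iff₀ hppos).mp hkle
        have hk2 : (n : ℝ) / p < (⌊(n : ℝ) / p⌋₊ : ℝ) + 1 := Nat.lt_floor_add_one _
        have hnap : (n : ℝ) ≤ (⌊(n : ℝ) / p⌋₊ : ℝ) * p + p := by
          have := (div_lt_iff₀ hppos).mp hk2
          nlinarith [this]
        have hm2M : M ≤ ⌊(n : ℝ) / p⌋₊ + ⌈2 * δ * (n : ℝ)⌉₊ := by
          have hMr : (M : ℝ) ≤ ((⌊(n : ℝ) / p⌋₊ + ⌈2 * δ * (n : ℝ)⌉₊ : ℕ) : ℝ) := by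
            push_cast
            linarith
          exact_mod_cast hMr
        have hlow := (hub _ hm2M).2
        have hm2cast : ((⌊(n : ℝ) / p⌋₊ + ⌈2 * δ * (n : ℝ)⌉₊ : ℕ) : ℝ)
            = (⌊(n : ℝ) / p⌋₊ : ℝ) + (⌈2 * δ * (n : ℝ)⌉₊ : ℝ) := by push_cast; ring
        have hfac2 : (0 : ℝ) < p - p * δ / 2 := by nlinarith [mul_le_mul_of_nonneg_left hδhalf hppos.le]
        have e3 : ((⌊(n : ℝ) / p⌋₊ : ℝ) + 2 * δ * n) * (p - p * δ / 2)
            ≤ ((⌊(n : ℝ) / p⌋₊ + ⌈2 * δ * (n : ℝ)⌉₊ : ℕ) : ℝ) * (p - p * δ / 2) := by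
          refine mul_le_mul_of_nonneg_right ?_ hfac2.le
          rw [hm2cast]
          linarith
        have p1 : (⌊(n : ℝ) / p⌋₊ : ℝ) * p * δ ≤ (n : ℝ) * δ :=
          mul_le_mul_of_nonneg_right hap hδ0.le
        have p6 : δ * (n : ℝ) * (2 - δ) * 1 ≤ δ * (n : ℝ) * (2 - δ) * p := by
          refine mul_le_mul_of_nonneg_left hp1 ?_
          have : (0 : ℝ) ≤ 2 - δ := by linarith
          positivity
        have p7 : (3 / 2 : ℝ) * (δ * n) ≤ δ * (n : ℝ) * (2 - δ) := by
          nlinarith [mul_nonneg hδ0.le hnn, mul_nonneg (mul_nonneg hδ0.le hnn) (by linarith : (0:ℝ) ≤ 1/2 - δ)]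
        have hfin : (n : ℝ) ≤ I (⌊(n : ℝ) / p⌋₊ + ⌈2 * δ * (n : ℝ)⌉₊) ω := by
          nlinarith [hlow, e3, hnap, p1, p6, p7, h3]
        exact_mod_cast hfin
    have hbadmeas : ∀ n : ℕ, MeasurableSet {ω : Ω |
        ¬ (I (⌊(n : ℝ) / p⌋₊ - ⌈2 * δ * (n : ℝ)⌉₊) ω ≤ n
          ∧ n ≤ I (⌊(n : ℝ) / p⌋₊ + ⌈2 * δ * (n : ℝ)⌉₊) ω)} := by
      intro n
      have heq : {ω : Ω | ¬ (I (⌊(n : ℝ) / p⌋₊ - ⌈2 * δ * (n : ℝ)⌉₊) ω ≤ n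
            ∧ n ≤ I (⌊(n : ℝ) / p⌋₊ + ⌈2 * δ * (n : ℝ)⌉₊) ω)}
          = (((fun ω => I (⌊(n : ℝ) / p⌋₊ - ⌈2 * δ * (n : ℝ)⌉₊) ω) ⁻¹' (Set.Iic n))
            ∩ ((fun ω => I (⌊(n : ℝ) / p⌋₊ + ⌈2 * δ * (n : ℝ)⌉₊) ω) ⁻¹' (Set.Ici n)))ᶜ := by
        ext ω
        simp [Set.mem_Iic, Set.mem_Ici, -not_and]
      rw [heq]
      exact ((hImeas _ ((Set.to_countable _).measurableSet)).inter
        (hImeas _ ((Set.to_countable _).measurableSet))).compl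
    have hbad := pr_tendsto_zero μ _ hbadmeas (by
      filter_upwards [hae] with ω hω
      filter_upwards [hω] with n hn
      simp only [Set.mem_setOf_eq, not_not]
      exact hn)
    have hbadev := hbad.eventually (gt_mem_nhds (by positivity : (0 : ℝ) < ε / 2))
    refine finisher hI0 hImono μ u C hterm ε (fun n => ⌊(n : ℝ) / p⌋₊)
      (fun n => ⌊(n : ℝ) / p⌋₊ - ⌈2 * δ * (n : ℝ)⌉₊)
      (fun n => ⌊(n : ℝ) / p⌋₊ + ⌈2 * δ * (n : ℝ)⌉₊)
      (fun n => Nat.sub_le _ _) (fun n => Nat.le_add_right _ _) hbadev ?_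
    filter_upwards [hev2C, eventually_ge_atTop 1] with n h2C hn1
    refine ⟨hn1, ?_⟩
    have hnR : (1 : ℝ) ≤ n := by exact_mod_cast hn1
    have hnpos : (0 : ℝ) < n := by linarith
    have hCn : (0 : ℝ) ≤ C / n := by positivity
    have hcard : (⌊(n : ℝ) / p⌋₊ + ⌈2 * δ * (n : ℝ)⌉₊
        - (⌊(n : ℝ) / p⌋₊ - ⌈2 * δ * (n : ℝ)⌉₊) : ℕ) ≤ 2 * ⌈2 * δ * (n : ℝ)⌉₊ := by
      omega
    have hcn : (⌈2 * δ * (n : ℝ)⌉₊ : ℝ) ≤ 2 * δ * n + 1 :=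
      le_of_lt (Nat.ceil_lt_add_one (by positivity))
    have hcast : ((⌊(n : ℝ) / p⌋₊ + ⌈2 * δ * (n : ℝ)⌉₊
        - (⌊(n : ℝ) / p⌋₊ - ⌈2 * δ * (n : ℝ)⌉₊) : ℕ) : ℝ) ≤ 2 * (2 * δ * n + 1) := by
      calc ((⌊(n : ℝ) / p⌋₊ + ⌈2 * δ * (n : ℝ)⌉₊
            - (⌊(n : ℝ) / p⌋₊ - ⌈2 * δ * (n : ℝ)⌉₊) : ℕ) : ℝ)
          ≤ ((2 * ⌈2 * δ * (n : ℝ)⌉₊ : ℕ) : ℝ) := by exact_mod_cast hcard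
        _ = 2 * (⌈2 * δ * (n : ℝ)⌉₊ : ℝ) := by push_cast; ring
        _ ≤ 2 * (2 * δ * n + 1) := by linarith
    calc ((⌊(n : ℝ) / p⌋₊ + ⌈2 * δ * (n : ℝ)⌉₊
          - (⌊(n : ℝ) / p⌋₊ - ⌈2 * δ * (n : ℝ)⌉₊) : ℕ) : ℝ) * (C / n)
        ≤ (2 * (2 * δ * n + 1)) * (C / n) := mul_le_mul_of_nonneg_right hcast hCn
      _ = 4 * δ * C * (n / n) + 2 * C / n := by ring
      _ = 4 * δ * C + 2 * C / n := by rw [div_self (ne_of_gt hnpos), mul_one]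
      _ < ε / 4 + ε / 4 := by
          have h4 : 4 * δ * C ≤ ε / 4 := hδC
          linarith
      _ = ε / 2 := by ring
  · -- non-integrable case : p = 0
    have hp0 : p = 0 := by rw [← hSmean 0, integral_undef hint]
    obtain ⟨K, hK⟩ := trunc_large μ hYmeas (fun ω => Nat.cast_nonneg _) hint (1 / δ + 1)
    have htr : Integrable (fun ω => min ((I 1 ω - I 0 ω : ℕ) : ℝ) (K : ℝ)) μ := by
      refine Integrable.mono' (integrable_const (K : ℝ))
        ((hYmeas.min measurable_const).aestronglyMeasurable) (ae_of_all μ fun ω => ?_)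
      rw [Real.norm_eq_abs, abs_of_nonneg (le_min (Nat.cast_nonneg _) (Nat.cast_nonneg _))]
      exact min_le_right _ _
    have hslln := slln_phi μ I hSmeas hSindep hSident (fun x : ℕ => min (x : ℝ) (K : ℝ)) htr
    have hae : ∀ᵐ ω ∂μ, ∀ᶠ n : ℕ in atTop,
        I 0 ω ≤ n ∧ n ≤ I ⌈δ * (n : ℝ)⌉₊ ω := by
      filter_upwards [hslln] with ω hω
      obtain ⟨M, hM⟩ := Metric.tendsto_atTop.mp hω 1 one_pos
      have hIm : ∀ m : ℕ, M ≤ m → 1 ≤ m → (m : ℝ) / δ ≤ I m ω := by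
        intro m hm hm1
        have h1 := hM m hm
        rw [Real.dist_eq, abs_lt] at h1
        have hmpos : (0 : ℝ) < m := by exact_mod_cast hm1
        have h3 : (1 : ℝ) / δ
            ≤ (∑ i ∈ Finset.range m, min ((I (i + 1) ω - I i ω : ℕ) : ℝ) (K : ℝ)) / m := by
          have h2 : ∫ ω', min ((I 1 ω' - I 0 ω' : ℕ) : ℝ) (K : ℝ) ∂μ - 1
              < (∑ i ∈ Finset.range m, min ((I (i + 1) ω - I i ω : ℕ) : ℝ) (K : ℝ)) / m := by
            linarith [h1.1]
          linarith [hK]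
        have h4 : (1 / δ) * m
            ≤ ∑ i ∈ Finset.range m, min ((I (i + 1) ω - I i ω : ℕ) : ℝ) (K : ℝ) := by
          have := (le_div_iff₀ hmpos).mp h3
          linarith
        have h5 : ∑ i ∈ Finset.range m, min ((I (i + 1) ω - I i ω : ℕ) : ℝ) (K : ℝ)
            ≤ ∑ i ∈ Finset.range m, ((I (i + 1) ω - I i ω : ℕ) : ℝ) :=
          Finset.sum_le_sum fun i _ => min_le_left _ _
        calc (m : ℝ) / δ = (1 / δ) * m := by ring
          _ ≤ ∑ i ∈ Finset.range m, min ((I (i + 1) ω - I i ω : ℕ) : ℝ) (K : ℝ) := h4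
          _ ≤ ∑ i ∈ Finset.range m, ((I (i + 1) ω - I i ω : ℕ) : ℝ) := h5
          _ = I m ω := (hIcast ω m).symm
      filter_upwards [hlinev δ (M : ℝ) hδ0, hlinev δ 1 hδ0] with n h1 h2
      refine ⟨by rw [hI0 ω]; exact Nat.zero_le n, ?_⟩
      have hge : δ * (n : ℝ) ≤ ⌈δ * (n : ℝ)⌉₊ := Nat.le_ceil _
      have hM2 : M ≤ ⌈δ * (n : ℝ)⌉₊ := by
        have : (M : ℝ) ≤ (⌈δ * (n : ℝ)⌉₊ : ℝ) := by linarith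
        exact_mod_cast this
      have h12 : 1 ≤ ⌈δ * (n : ℝ)⌉₊ := by
        have : (1 : ℝ) ≤ (⌈δ * (n : ℝ)⌉₊ : ℝ) := by linarith
        exact_mod_cast this
      have h6 := hIm _ hM2 h12
      have h7 : (n : ℝ) ≤ (⌈δ * (n : ℝ)⌉₊ : ℝ) / δ := by
        rw [le_div_iff₀ hδ0]
        linarith [hge]
      have hfin : (n : ℝ) ≤ I ⌈δ * (n : ℝ)⌉₊ ω := le_trans h7 h6
      exact_mod_cast hfin
    have hbadmeas : ∀ n : ℕ, MeasurableSet {ω : Ω |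
        ¬ (I 0 ω ≤ n ∧ n ≤ I ⌈δ * (n : ℝ)⌉₊ ω)} := by
      intro n
      have heq : {ω : Ω | ¬ (I 0 ω ≤ n ∧ n ≤ I ⌈δ * (n : ℝ)⌉₊ ω)}
          = (((fun ω => I 0 ω) ⁻¹' (Set.Iic n))
            ∩ ((fun ω => I ⌈δ * (n : ℝ)⌉₊ ω) ⁻¹' (Set.Ici n)))ᶜ := by
        ext ω
        simp [Set.mem_Iic, Set.mem_Ici, -not_and]
      rw [heq]
      exact ((hImeas _ ((Set.to_countable _).measurableSet)).inter
        (hImeas _ ((Set.to_countable _).measurableSet))).compl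
    have hbad := pr_tendsto_zero μ _ hbadmeas (by
      filter_upwards [hae] with ω hω
      filter_upwards [hω] with n hn
      simp only [Set.mem_setOf_eq, not_not]
      exact hn)
    have hbadev := hbad.eventually (gt_mem_nhds (by positivity : (0 : ℝ) < ε / 2))
    refine finisher hI0 hImono μ u C hterm ε (fun n => ⌊(n : ℝ) / p⌋₊)
      (fun _ => 0) (fun n => ⌈δ * (n : ℝ)⌉₊)
      (fun n => Nat.zero_le _) (fun n => by simp only [hp0, div_zero, Nat.floor_zero]; exact Nat.zero_le _)
      hbadev ?_
    filter_upwards [hevC, eventually_ge_atTop 1] with n hCn4 hn1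
    refine ⟨hn1, ?_⟩
    have hnR : (1 : ℝ) ≤ n := by exact_mod_cast hn1
    have hnpos : (0 : ℝ) < n := by linarith
    have hCn : (0 : ℝ) ≤ C / n := by positivity
    have hcn : ((⌈δ * (n : ℝ)⌉₊ - 0 : ℕ) : ℝ) ≤ δ * n + 1 := by
      rw [Nat.sub_zero]
      exact le_of_lt (Nat.ceil_lt_add_one (by positivity))
    calc ((⌈δ * (n : ℝ)⌉₊ - 0 : ℕ) : ℝ) * (C / n)
        ≤ (δ * n + 1) * (C / n) := mul_le_mul_of_nonneg_right hcn hCn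
      _ = δ * C * (n / n) + C / n := by ring
      _ = δ * C + C / n := by rw [div_self (ne_of_gt hnpos), mul_one]
      _ < ε / 4 + ε / 4 := by
          have h4 : δ * C ≤ ε / 4 := by nlinarith
          linarith
      _ = ε / 2 := by ring


end EIPaper
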